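/- For every α ∈ [−1, 1/2], the Takagi–Landsberg function f_α has t = 1/2 as its unique global maximizer on [0,1], and the maximum value is f_α(1/2) = 1/2. -/

import Mathlib

open MeasureTheory Filter Set

/-- The tent map: distance to the nearest integer. -/
noncomputable def phi (t : ℝ) : ℝ := ⨅ z : ℤ, |t - (z : ℝ)|

/-- A function in the Takagi class, for coefficient sequence `c`. -/
noncomputable def takagiF (c : ℕ → ℝ) (t : ℝ) : ℝ := ∑' m : ℕ, c m * phi (2 ^ m * t)

/-- `T(ρ) = Σ 2^{-(n+2)} (1 - ρ n)`. -/
noncomputable def Trho (ρ : ℕ → ℝ) : ℝ := ∑' n : ℕ, (1 - ρ n) / 2 ^ (n + 2)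

/-- A `{-1,+1}`-valued sequence. -/
def IsSign (ρ : ℕ → ℝ) : Prop := ∀ n, ρ n = 1 ∨ ρ n = -1

/-- `ρ` is a Rademacher expansion of `t`. -/
def IsRademacherExp (ρ : ℕ → ℝ) (t : ℝ) : Prop := IsSign ρ ∧ Trho ρ = t

/-- The step condition for coefficients `c`. -/
def StepCond (c : ℕ → ℝ) (ρ : ℕ → ℝ) : Prop :=
  ∀ n : ℕ, 1 ≤ n → ρ n * ∑ m ∈ Finset.range n, 2 ^ m * c m * ρ m ≤ 0

noncomputable def sharpAux (c : ℕ → ℝ) : ℕ → ℝ × ℝ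
  | 0 => (1, c 0)
  | n + 1 =>
    let S := (sharpAux c n).2
    let r : ℝ := if S ≤ 0 then 1 else -1
    (r, S + 2 ^ (n + 1) * c (n + 1) * r)

/-- The sequence `ρ♯` for coefficients `c`. -/
noncomputable def rhoSharp (c : ℕ → ℝ) (n : ℕ) : ℝ := (sharpAux c n).1

noncomputable def flatAux (c : ℕ → ℝ) : ℕ → ℝ × ℝ
  | 0 => (1, c 0)
  | n + 1 =>
    let S := (flatAux c n).2
    let r : ℝ := if S < 0 then 1 else -1
    (r, S + 2 ^ (n + 1) * c (n + 1) * r)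

/-- The sequence `ρ♭` for coefficients `c`. -/
noncomputable def rhoFlat (c : ℕ → ℝ) (n : ℕ) : ℝ := (flatAux c n).1

/-- The Takagi–Landsberg function with parameter `α`. -/
noncomputable def fTL (α : ℝ) (t : ℝ) : ℝ := ∑' m : ℕ, α ^ m / 2 ^ m * phi (2 ^ m * t)

noncomputable def sharpAuxTL (α : ℝ) : ℕ → ℝ × ℝ
  | 0 => (1, 1)
  | n + 1 =>
    let S := (sharpAuxTL α n).2
    let r : ℝ := if S ≤ 0 then 1 else -1
    (r, S + α ^ (n + 1) * r)

/-- The sequence `ρ♯(α)` for the Takagi–Landsberg function. -/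
noncomputable def rhoSharpTL (α : ℝ) (n : ℕ) : ℝ := (sharpAuxTL α n).1

noncomputable def flatAuxTL (α : ℝ) : ℕ → ℝ × ℝ
  | 0 => (1, 1)
  | n + 1 =>
    let S := (flatAuxTL α n).2
    let r : ℝ := if S < 0 then 1 else -1
    (r, S + α ^ (n + 1) * r)

/-- The sequence `ρ♭(α)` for the Takagi–Landsberg function. -/
noncomputable def rhoFlatTL (α : ℝ) (n : ℕ) : ℝ := (flatAuxTL α n).1

/-- `τ♯(α) = T(ρ♯(α))`. -/
noncomputable def tauSharp (α : ℝ) : ℝ := Trho (rhoSharpTL α)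

/-- `τ♭(α) = T(ρ♭(α))`. -/
noncomputable def tauFlat (α : ℝ) : ℝ := Trho (rhoFlatTL α)

/-- The Littlewood polynomial `p_{2n}(x) = 1 - x - x² - ⋯ - x^{2n}`. -/
noncomputable def p2n (n : ℕ) (x : ℝ) : ℝ := 1 - ∑ m ∈ Finset.Icc 1 (2 * n), x ^ m

/-!
The self-similarity `f(t) = φ(t) + (α/2) f(2t)` reduces everything to the sign and size of
`S = f(2t) = ∑ (α/2)^m g_m` with `g_m = φ(2^m · 2t)`, where `0 ≤ g_m ≤ 1/2` and `g_{m+1} ≤ 2 g_m`.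
For `-1 ≤ α ≤ 0` each even term dominates the following odd one, so `S ≥ 0` and `f(t) ≤ φ(t)`.
For `0 < α ≤ 1/2` the bound `g_m ≤ 2^m g_0`, strict for large `m` because `g` is bounded, gives
`α S < g_0 = φ(2t) ≤ 1 - 2φ(t)`. Either way `f(t) < 1/2` as soon as `φ(t) < 1/2`, which on
`[0, 1]` means `t ≠ 1/2`, while `f(1/2) = φ(1/2) = 1/2`.
-/

theorem phi_le_abs_sub_intCast (x : ℝ) (z : ℤ) : phi x ≤ |x - z| :=
  ciInf_le ⟨0, by rintro _ ⟨z, rfl⟩; exact abs_nonneg _⟩ z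

theorem phi_eq_abs_sub_round (x : ℝ) : phi x = |x - round x| :=
  le_antisymm (phi_le_abs_sub_intCast x _) (le_ciInf fun z => round_le x z)

theorem phi_nonneg (x : ℝ) : 0 ≤ phi x :=
  phi_eq_abs_sub_round x ▸ abs_nonneg _

theorem phi_le_half (x : ℝ) : phi x ≤ 1 / 2 := by
  rw [phi_eq_abs_sub_round]; exact abs_sub_round x

theorem phi_intCast (z : ℤ) : phi z = 0 :=
  le_antisymm (by simpa using phi_le_abs_sub_intCast z z) (phi_nonneg _)

theorem phi_half : phi (1 / 2) = 1 / 2 := by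
  refine le_antisymm (by simpa using phi_le_abs_sub_intCast (1 / 2) 0) (le_ciInf fun z => ?_)
  rcases le_or_gt z 0 with hz | hz
  · have : (z : ℝ) ≤ 0 := by exact_mod_cast hz
    exact le_abs.2 (Or.inl (by linarith))
  · have : (1 : ℝ) ≤ z := by exact_mod_cast hz
    exact le_abs.2 (Or.inr (by linarith))

theorem phi_lt_half_of_mem_Icc {x : ℝ} (hx : x ∈ Icc 0 1) (hne : x ≠ 1 / 2) : phi x < 1 / 2 := by
  rcases hne.lt_or_gt with h | h
  · calc phi x ≤ |x - (0 : ℤ)| := phi_le_abs_sub_intCast x 0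
      _ = x := by simp [abs_of_nonneg hx.1]
      _ < 1 / 2 := h
  · calc phi x ≤ |x - (1 : ℤ)| := phi_le_abs_sub_intCast x 1
      _ = 1 - x := by rw [Int.cast_one, abs_sub_comm, abs_of_nonneg (by linarith [hx.2])]
      _ < 1 / 2 := by linarith

theorem phi_two_mul_le (x : ℝ) : phi (2 * x) ≤ 2 * phi x := by
  calc phi (2 * x) ≤ |2 * x - (2 * round x : ℤ)| := phi_le_abs_sub_intCast _ _
    _ = 2 * phi x := by
      rw [phi_eq_abs_sub_round, Int.cast_mul, Int.cast_two, ← mul_sub, abs_mul, abs_two]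

theorem phi_two_mul_le_one_sub (x : ℝ) : phi (2 * x) ≤ 1 - 2 * phi x := by
  have hd := abs_sub_round x
  rw [phi_eq_abs_sub_round x]
  rcases abs_cases (x - round x) with ⟨hd_eq, hd_nonneg⟩ | ⟨hd_eq, hd_neg⟩
  · calc phi (2 * x) ≤ |2 * x - (2 * round x + 1 : ℤ)| := phi_le_abs_sub_intCast _ _
      _ = 1 - 2 * |x - round x| := by
        rw [abs_sub_comm, abs_of_nonneg (by push_cast; linarith)]; push_cast; linarith
  · calc phi (2 * x) ≤ |2 * x - (2 * round x - 1 : ℤ)| := phi_le_abs_sub_intCast _ _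
      _ = 1 - 2 * |x - round x| := by
        rw [abs_of_nonneg (by push_cast; linarith)]; push_cast; linarith

theorem phi_two_pow_mul_le (x : ℝ) (m : ℕ) : phi (2 ^ m * x) ≤ 2 ^ m * phi x := by
  induction m with
  | zero => simp
  | succ m ih =>
    calc phi (2 ^ (m + 1) * x) = phi (2 * (2 ^ m * x)) := by ring_nf
      _ ≤ 2 * phi (2 ^ m * x) := phi_two_mul_le _
      _ ≤ 2 ^ (m + 1) * phi x := by rw [pow_succ]; linarith

theorem tsum_pow_mul_nonneg_of_le_two_mul {β : ℝ} (hβ : -(1 / 2) ≤ β) (hβ0 : β ≤ 0)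
    {g : ℕ → ℝ} (hg : ∀ m, 0 ≤ g m) (hg2 : ∀ m, g (m + 1) ≤ 2 * g m) :
    0 ≤ ∑' m, β ^ m * g m := by
  by_cases hsum : Summable fun m => β ^ m * g m
  swap
  · exact (tsum_eq_zero_of_not_summable hsum).ge
  have heven : Summable fun k => β ^ (2 * k) * g (2 * k) :=
    hsum.comp_injective (mul_right_injective₀ (two_ne_zero : (2 : ℕ) ≠ 0))
  have hodd : Summable fun k => β ^ (2 * k + 1) * g (2 * k + 1) :=
    hsum.comp_injective (i := fun k => 2 * k + 1) fun a b h => by simpa using h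
  rw [← tsum_even_add_odd (f := fun m => β ^ m * g m) heven hodd, ← heven.tsum_add hodd]
  refine tsum_nonneg fun k => ?_
  have hβk : 0 ≤ β ^ (2 * k) := by rw [pow_mul]; positivity
  -- `β g_{2k+1} ≥ 2β g_{2k} ≥ -g_{2k}`
  have hpair : 0 ≤ g (2 * k) + β * g (2 * k + 1) := by nlinarith [hg (2 * k), hg2 (2 * k)]
  calc (0 : ℝ) ≤ β ^ (2 * k) * (g (2 * k) + β * g (2 * k + 1)) := mul_nonneg hβk hpair
    _ = β ^ (2 * k) * g (2 * k) + β ^ (2 * k + 1) * g (2 * k + 1) := by ring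

theorem two_mul_mul_tsum_pow_mul_lt {β : ℝ} (hβ0 : 0 < β) (hβ : β ≤ 1 / 4) {g : ℕ → ℝ}
    (hg : ∀ m, g m ≤ 2 ^ m * g 0) (hbdd : BddAbove (range g)) (hg0 : 0 < g 0) :
    2 * β * ∑' m, β ^ m * g m < g 0 := by
  by_cases hsum : Summable fun m => β ^ m * g m
  swap
  · rwa [tsum_eq_zero_of_not_summable hsum, mul_zero]
  obtain ⟨C, hC⟩ := hbdd
  obtain ⟨N, hN⟩ : ∃ N : ℕ, C < 2 ^ N * g 0 := by
    obtain ⟨N, hN⟩ := pow_unbounded_of_one_lt (C / g 0) one_lt_two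
    exact ⟨N, (div_lt_iff₀ hg0).1 hN⟩
  have hgeo : HasSum (fun m => (2 * β) ^ m * g 0) ((1 - 2 * β)⁻¹ * g 0) :=
    (hasSum_geometric_of_lt_one (by positivity) (by linarith)).mul_right _
  have hterm : ∀ m, (2 * β) ^ m * g 0 = β ^ m * (2 ^ m * g 0) := fun m => by ring
  have hlt : ∑' m, β ^ m * g m < (1 - 2 * β)⁻¹ * g 0 := by
    refine hgeo.tsum_eq ▸ hsum.tsum_lt_tsum (i := N) (fun m => ?_) ?_ hgeo.summable
    · rw [hterm]; exact mul_le_mul_of_nonneg_left (hg m) (by positivity)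
    · rw [hterm]
      exact mul_lt_mul_of_pos_left ((hC (mem_range_self N)).trans_lt hN) (by positivity)
  calc 2 * β * ∑' m, β ^ m * g m < 2 * β * ((1 - 2 * β)⁻¹ * g 0) := by gcongr
    _ = 2 * β / (1 - 2 * β) * g 0 := by ring
    _ ≤ g 0 := mul_le_of_le_one_left hg0.le ((div_le_one (by linarith)).2 (by linarith))

theorem fTL_eq_tsum (α t : ℝ) : fTL α t = ∑' m : ℕ, (α / 2) ^ m * phi (2 ^ m * t) := by
  simp only [fTL, div_pow]

theorem summable_fTL {α : ℝ} (hα : |α| < 2) (t : ℝ) :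
    Summable fun m : ℕ => (α / 2) ^ m * phi (2 ^ m * t) := by
  refine .of_norm_bounded ((summable_geometric_of_abs_lt_one (r := α / 2) ?_).abs) fun m => ?_
  · rw [abs_div, abs_two]; linarith
  · rw [Real.norm_eq_abs, abs_mul, abs_of_nonneg (phi_nonneg _)]
    exact mul_le_of_le_one_right (abs_nonneg _) ((phi_le_half _).trans (by norm_num))

theorem fTL_eq_phi_add_fTL_two_mul {α : ℝ} (hα : |α| < 2) (t : ℝ) :
    fTL α t = phi t + α / 2 * fTL α (2 * t) := by
  rw [fTL_eq_tsum, (summable_fTL hα t).tsum_eq_zero_add, fTL_eq_tsum, ← tsum_mul_left]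
  congr 1
  · simp
  · exact tsum_congr fun m => by rw [pow_succ, pow_succ, mul_assoc _ 2 t]; ring

theorem fTL_half (α : ℝ) : fTL α (1 / 2) = 1 / 2 := by
  rw [fTL_eq_tsum, tsum_eq_single 0 fun m hm => ?_]
  · rw [pow_zero, pow_zero, one_mul, one_mul, phi_half]
  · obtain ⟨k, rfl⟩ := Nat.exists_eq_succ_of_ne_zero hm
    have : (2 : ℝ) ^ (k + 1) * (1 / 2) = ((2 ^ k : ℤ) : ℝ) := by push_cast; ring
    rw [this, phi_intCast, mul_zero]

theorem fTL_lt_half {α : ℝ} (hα : α ∈ Icc (-1) (1 / 2)) {t : ℝ} (ht : phi t < 1 / 2) :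
    fTL α t < 1 / 2 := by
  obtain ⟨hα1, hα2⟩ := hα
  set g : ℕ → ℝ := fun m => phi (2 ^ m * (2 * t))
  have hS : fTL α (2 * t) = ∑' m, (α / 2) ^ m * g m := fTL_eq_tsum α (2 * t)
  rw [fTL_eq_phi_add_fTL_two_mul (abs_lt.2 ⟨by linarith, by linarith⟩), hS]
  rcases le_or_gt α 0 with hα0 | hα0
  · have hg2 : ∀ m, g (m + 1) ≤ 2 * g m := fun m => by
      simp only [g]
      rw [pow_succ, mul_comm _ (2 : ℝ), mul_assoc]
      exact phi_two_mul_le _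
    have hS0 : 0 ≤ ∑' m, (α / 2) ^ m * g m :=
      tsum_pow_mul_nonneg_of_le_two_mul (by linarith) (by linarith) (fun m => phi_nonneg _) hg2
    linarith [mul_nonpos_of_nonpos_of_nonneg (by linarith : α / 2 ≤ 0) hS0]
  have hg : ∀ m, g m ≤ 2 ^ m * g 0 := fun m => by
    simpa [g] using phi_two_pow_mul_le (2 * t) m
  have hg0 : g 0 ≤ 1 - 2 * phi t := by simpa [g] using phi_two_mul_le_one_sub t
  rcases (phi_nonneg (2 * t)).eq_or_lt with h2t | h2t
  · have hzero : ∀ m, g m = 0 := fun m =>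
      le_antisymm ((hg m).trans_eq (by simp [g, ← h2t])) (phi_nonneg _)
    simpa [hzero] using ht
  have hbdd : BddAbove (range g) := ⟨1 / 2, by rintro _ ⟨m, rfl⟩; exact phi_le_half _⟩
  have hαS : 2 * (α / 2) * ∑' m, (α / 2) ^ m * g m < g 0 :=
    two_mul_mul_tsum_pow_mul_lt (by linarith) (by linarith) hg hbdd (by simpa [g] using h2t)
  linarith

theorem takagi_landsberg_maximizer_middle_range
    (α : ℝ) (hα : α ∈ Set.Icc (-1 : ℝ) (1 / 2)) :
    {t : ℝ | t ∈ Set.Icc (0 : ℝ) 1 ∧ ∀ s ∈ Set.Icc (0 : ℝ) 1, fTL α s ≤ fTL α t}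
      = {1 / 2}
    ∧ fTL α (1 / 2) = 1 / 2 := by
  have hlt : ∀ s ∈ Icc (0 : ℝ) 1, s ≠ 1 / 2 → fTL α s < 1 / 2 := fun s hs hne =>
    fTL_lt_half hα (phi_lt_half_of_mem_Icc hs hne)
  refine ⟨Set.ext fun t => ⟨fun ⟨ht, hmax⟩ => ?_, ?_⟩, fTL_half α⟩
  · by_contra hne
    have := hmax (1 / 2) ⟨by norm_num, by norm_num⟩
    linarith [hlt t ht hne, fTL_half α]
  · rintro rfl
    refine ⟨⟨by norm_num, by norm_num⟩, fun s hs => ?_⟩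
    rcases eq_or_ne s (1 / 2) with rfl | hne
    · exact le_rfl
    · exact (hlt s hs hne).le.trans (fTL_half α).ge
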